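/- arXiv:2110.14618 — 7 statements merged into one kernel-verified Lean document; each statement's English description precedes it below -/
import Mathlib

section
/- (Projection of 2-labeled torus curves to the solid torus.) For all integers $r,s$, the projection satisfies $y_{r,s} = t^{-2rs}\, y_{r,0}$, i.e. $W(r,s)\cdot 1_B = t^{-2rs}\,(W(r,0)\cdot 1_B)$. -/
theorem stmt_4 (F : Type*) [Field F] (t : F) (ht : t ≠ 0)
    (A : Type*) [Ring A] [Algebra F A]
    (P W : ℤ → ℤ → A)
    (R1 : ∀ m n r s : ℤ,
      P m n * P r s = P (m + r) (n + s) + P (m - r) (n - s) * W r s)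
    (R2 : ∀ m n r s : ℤ,
      P m n * W r s = t ^ (2 * (m * s - n * r)) • (W r s * P m n))
    (R3 : ∀ m n : ℤ, P m n * W (-m) (-n) = P (-m) (-n))
    (R4 : ∀ m n r s : ℤ,
      W m n * W r s = t ^ (2 * (m * s - n * r)) • W (m + r) (n + s))
    (R5P : P 0 0 = 2) (R5W : W 0 0 = 1)
    (B : Type*) [CommRing B] [Algebra F B] [Module A B]
    (hFA : ∀ (c : F) (a : A) (u : B), (c • a) • u = c • (a • u))
    (H1P : ∀ (m : ℤ) (u : B), P m 0 • u = (P m 0 • (1 : B)) * u)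
    (H1W : ∀ (m : ℤ) (u : B), W m 0 • u = (W m 0 • (1 : B)) * u)
    (H2 : ∀ s : ℤ, W 0 s • (1 : B) = 1)
    :
    ∀ r s : ℤ, W r s • (1 : B) = t ^ (-2 * r * s) • (W r 0 • (1 : B)) := by
  intro r s
  have h := R4 r 0 0 s
  simp only [mul_zero, zero_mul, sub_zero, add_zero, zero_add] at h
  have h1 : (W r 0 * W 0 s) • (1 : B) = t ^ (2 * (r * s)) • (W r s • (1 : B)) := by
    rw [h, hFA]
  rw [mul_smul, H2] at h1
  have h2 : t ^ (-2 * r * s) • (W r 0 • (1 : B))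
      = t ^ (-2 * r * s) • (t ^ (2 * (r * s)) • (W r s • (1 : B))) := by rw [h1]
  rw [smul_smul, ← zpow_add₀ ht] at h2
  have : -2 * r * s + 2 * (r * s) = 0 := by ring
  rw [this, zpow_zero, one_smul] at h2
  exact h2.symm
end

section
/- (Projection of meridional 1-labeled torus curves.) For every integer $n$, the projection satisfies $x_{0,n} = (t^{n} + t^{-n})\,1_B$, i.e. $P(0,n)\cdot 1_B = (t^n + t^{-n})\,1_B$. -/
theorem stmt_5 (F : Type*) [Field F] (t : F) (ht : t ≠ 0)
    (A : Type*) [Ring A] [Algebra F A]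
    (P W : ℤ → ℤ → A)
    (R1 : ∀ m n r s : ℤ,
      P m n * P r s = P (m + r) (n + s) + P (m - r) (n - s) * W r s)
    (R2 : ∀ m n r s : ℤ,
      P m n * W r s = t ^ (2 * (m * s - n * r)) • (W r s * P m n))
    (R3 : ∀ m n : ℤ, P m n * W (-m) (-n) = P (-m) (-n))
    (R4 : ∀ m n r s : ℤ,
      W m n * W r s = t ^ (2 * (m * s - n * r)) • W (m + r) (n + s))
    (R5P : P 0 0 = 2) (R5W : W 0 0 = 1)
    (B : Type*) [CommRing B] [Algebra F B] [Module A B]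
    (hFA : ∀ (c : F) (a : A) (u : B), (c • a) • u = c • (a • u))
    (H1P : ∀ (m : ℤ) (u : B), P m 0 • u = (P m 0 • (1 : B)) * u)
    (H1W : ∀ (m : ℤ) (u : B), W m 0 • u = (W m 0 • (1 : B)) * u)
    (H2 : ∀ s : ℤ, W 0 s • (1 : B) = 1)
    (H3 : P 0 1 • (1 : B) = (t + t⁻¹) • (1 : B)) :
    ∀ n : ℤ, P 0 n • (1 : B) = (t ^ n + t ^ (-n)) • (1 : B) := by
  -- scalar commutation
  have hsm : ∀ (c : F) (a : A) (u : B), a • (c • u) = c • (a • u) := by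
    intro c a u
    have h1 : c • u = (c • (1 : A)) • u := by rw [hFA, one_smul]
    rw [h1, ← mul_smul, mul_smul_comm, mul_one, hFA]
  set X : ℤ → B := fun n => P 0 n • (1 : B) with hX
  have hsymm : ∀ n : ℤ, X (-n) = X n := by
    intro n
    have h := R3 0 n
    rw [neg_zero] at h
    calc X (-n) = (P 0 n * W 0 (-n)) • (1 : B) := by rw [h]
      _ = P 0 n • (W 0 (-n) • (1 : B)) := mul_smul _ _ _
      _ = X n := by rw [H2]
  have hrec : ∀ n : ℤ, X (n + 1) = (t + t⁻¹) • X n - X (n - 1) := by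
    intro n
    have h := R1 0 n 0 1
    simp only [add_zero, zero_add, sub_zero, zero_sub] at h
    have h2 := congrArg (fun a : A => a • (1 : B)) h
    simp only [mul_smul, add_smul] at h2
    rw [H3, hsm, H2] at h2
    exact eq_sub_of_add_eq h2.symm
  have hf : ∀ n : ℤ, (t + t⁻¹) * (t ^ n + t ^ (-n)) - (t ^ (n - 1) + t ^ (-(n - 1)))
      = t ^ (n + 1) + t ^ (-(n + 1)) := by
    intro n
    rw [show -(n + 1) = -n - 1 by ring, show -(n - 1) = -n + 1 by ring,
      zpow_add_one₀ ht, zpow_add_one₀ ht, zpow_sub_one₀ ht, zpow_sub_one₀ ht]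
    ring
  have hnat : ∀ k : ℕ, X k = (t ^ (k : ℤ) + t ^ (-(k : ℤ))) • (1 : B) ∧
      X ((k : ℤ) + 1) = (t ^ ((k : ℤ) + 1) + t ^ (-((k : ℤ) + 1))) • (1 : B) := by
    intro k
    induction k with
    | zero =>
      constructor
      · show P 0 0 • (1 : B) = _
        rw [R5P]
        have h2 : (2 : A) = (1 : A) + 1 := by norm_num
        rw [h2, add_smul, one_smul]
        norm_num
        rw [show (2 : F) = 1 + 1 by norm_num, add_smul, one_smul]
        norm_num
      · show P 0 (0 + 1) • (1 : B) = _
        rw [zero_add, H3]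
        norm_num
    | succ k ih =>
      refine ⟨by push_cast; exact ih.2, ?_⟩
      have h := hrec ((k : ℤ) + 1)
      rw [add_sub_cancel_right, ih.1, ih.2] at h
      have hf' := hf ((k : ℤ) + 1)
      rw [add_sub_cancel_right] at hf'
      push_cast
      rw [h, smul_smul, ← sub_smul, hf']
  intro n
  obtain ⟨k, hk | hk⟩ := Int.eq_nat_or_neg n
  · rw [hk]; exact (hnat k).1
  · rw [hk]
    show X (-(k : ℤ)) = _
    rw [hsymm, neg_neg]
    rw [(hnat k).1, add_comm (t ^ (k : ℤ))]
end

section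
/- (Recursion for the projections $x_{m,k}$.) For every integer $m \ge 2$ and every integer $k$, one has $x_{m+1,k} = P(1,0)\cdot x_{m,k} - W(1,0)\cdot x_{m-1,k}$ and $x_{-m-1,k} = P(-1,0)\cdot x_{-m,k} - W(-1,0)\cdot x_{-m+1,k}$. -/
theorem stmt_6 (F : Type*) [Field F] (t : F) (ht : t ≠ 0)
    (A : Type*) [Ring A] [Algebra F A]
    (P W : ℤ → ℤ → A)
    (R1 : ∀ m n r s : ℤ,
      P m n * P r s = P (m + r) (n + s) + P (m - r) (n - s) * W r s)
    (R2 : ∀ m n r s : ℤ,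
      P m n * W r s = t ^ (2 * (m * s - n * r)) • (W r s * P m n))
    (R3 : ∀ m n : ℤ, P m n * W (-m) (-n) = P (-m) (-n))
    (R4 : ∀ m n r s : ℤ,
      W m n * W r s = t ^ (2 * (m * s - n * r)) • W (m + r) (n + s))
    (R5P : P 0 0 = 2) (R5W : W 0 0 = 1)
    (B : Type*) [CommRing B] [Algebra F B] [Module A B]
    (hFA : ∀ (c : F) (a : A) (u : B), (c • a) • u = c • (a • u))
    (H1P : ∀ (m : ℤ) (u : B), P m 0 • u = (P m 0 • (1 : B)) * u)
    (H1W : ∀ (m : ℤ) (u : B), W m 0 • u = (W m 0 • (1 : B)) * u)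
    (H2 : ∀ s : ℤ, W 0 s • (1 : B) = 1)
    :
    ∀ m : ℤ, 2 ≤ m → ∀ k : ℤ,
      P (m + 1) k • (1 : B) =
        P 1 0 • (P m k • (1 : B)) - W 1 0 • (P (m - 1) k • (1 : B)) ∧
      P (-m - 1) k • (1 : B) =
        P (-1) 0 • (P (-m) k • (1 : B)) - W (-1) 0 • (P (-m + 1) k • (1 : B)) := by
  -- Step 1: projection of any W m k to B, as a scalar multiple of W m 0 • 1.
  have hWk1 : ∀ m k : ℤ, W m k • (1 : B) = (t ^ (-(2 * (m * k))) • W m 0) • (1 : B) := by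
    intro m k
    have h1 : (W m 0 * W 0 k) • (1 : B) = W m 0 • (1 : B) := by
      rw [mul_smul, H2]
    rw [R4, hFA] at h1
    rw [add_zero, zero_add] at h1
    rw [hFA, ← h1, smul_smul, ← zpow_add₀ ht]
    have he : (-(2 * (m * k)) + 2 * (m * k - 0 * 0)) = 0 := by ring
    rw [he, zpow_zero, one_smul]
  -- Step 2: (P a (-k) * W m k) • 1 = (W m 0 • 1) * (P a (-k) • 1)
  have keyA : ∀ a m k : ℤ,
      (P a (-k) * W m k) • (1 : B) = (W m 0 • (1 : B)) * (P a (-k) • (1 : B)) := by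
    intro a m k
    rw [mul_smul, hWk1, ← mul_smul, mul_smul_comm, hFA, R2, hFA, mul_smul, H1W,
      smul_smul, ← zpow_add₀ ht]
    have he : (-(2 * (m * k)) + 2 * (a * 0 - -k * m)) = 0 := by ring
    rw [he, zpow_zero, one_smul]
  -- Step 3: x_{a,-k} = y_{a,0} * x_{-a,k}
  have keyB : ∀ a k : ℤ,
      P a (-k) • (1 : B) = (W a 0 • (1 : B)) * (P (-a) k • (1 : B)) := by
    intro a k
    have h3 := R3 (-a) k
    rw [neg_neg] at h3
    have hA := keyA (-a) a (-k)
    rw [neg_neg] at hA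
    rw [← h3, hA]
  -- Step 4: y_{m,0} * y_{e-m,0} = y_{e,0}
  have keyC : ∀ e m : ℤ,
      (W m 0 • (1 : B)) * (W (e - m) 0 • (1 : B)) = W e 0 • (1 : B) := by
    intro e m
    have h4 : (W m 0 * W (e - m) 0) • (1 : B) = W e 0 • (1 : B) := by
      rw [R4, hFA]
      have he : (2 * (m * 0 - 0 * (e - m))) = 0 := by ring
      have he2 : m + (e - m) = e := by ring
      rw [he, he2, add_zero, zpow_zero, one_smul]
    rw [← h4, mul_smul]
    exact (H1W m _).symm
  -- Step 5: the general recursion, for any shift e.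
  have key : ∀ e m k : ℤ,
      P (m + e) k • (1 : B) =
        P e 0 • (P m k • (1 : B)) - W e 0 • (P (m - e) k • (1 : B)) := by
    intro e m k
    have h1 := R1 e 0 m k
    have happ : (P e 0 * P m k) • (1 : B)
        = P (e + m) (0 + k) • (1 : B) + (P (e - m) (0 - k) * W m k) • (1 : B) := by
      rw [h1, add_smul]
    rw [mul_smul, zero_add, zero_sub] at happ
    have hem : e + m = m + e := add_comm e m
    rw [hem] at happ
    rw [keyA (e - m) m k, keyB (e - m) k, neg_sub] at happ
    have hmul : (W m 0 • (1 : B)) * ((W (e - m) 0 • (1 : B)) * (P (m - e) k • (1 : B)))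
        = W e 0 • (P (m - e) k • (1 : B)) := by
      rw [← mul_assoc, keyC e m, ← H1W]
    rw [hmul] at happ
    linear_combination -happ
  intro m _ k
  constructor
  · exact key 1 m k
  · have h := key (-1) (-m) k
    have h1 : -m + -1 = -m - 1 := by ring
    have h2 : -m - -1 = -m + 1 := by ring
    rw [h1, h2] at h
    exact h
end

section
/- (Action of 1-labeled torus skeins on the solid torus; first formula of the main action theorem.) For all integers $m,n,k,l$, one has $P(m,n)\cdot\big(x_{k,0}\, y_{l,0}\big) = t^{-2nl}\, y_{l,0}\, x_{m+k,n} + t^{-2n(k+l)}\, y_{k+l,0}\, x_{m-k,n}$ in $B$. -/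
theorem stmt_7 (F : Type*) [Field F] (t : F) (ht : t ≠ 0)
    (A : Type*) [Ring A] [Algebra F A]
    (P W : ℤ → ℤ → A)
    (R1 : ∀ m n r s : ℤ,
      P m n * P r s = P (m + r) (n + s) + P (m - r) (n - s) * W r s)
    (R2 : ∀ m n r s : ℤ,
      P m n * W r s = t ^ (2 * (m * s - n * r)) • (W r s * P m n))
    (R3 : ∀ m n : ℤ, P m n * W (-m) (-n) = P (-m) (-n))
    (R4 : ∀ m n r s : ℤ,
      W m n * W r s = t ^ (2 * (m * s - n * r)) • W (m + r) (n + s))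
    (R5P : P 0 0 = 2) (R5W : W 0 0 = 1)
    (B : Type*) [CommRing B] [Algebra F B] [Module A B]
    (hFA : ∀ (c : F) (a : A) (u : B), (c • a) • u = c • (a • u))
    (H1P : ∀ (m : ℤ) (u : B), P m 0 • u = (P m 0 • (1 : B)) * u)
    (H1W : ∀ (m : ℤ) (u : B), W m 0 • u = (W m 0 • (1 : B)) * u)
    (H2 : ∀ s : ℤ, W 0 s • (1 : B) = 1)
    :
    ∀ m n k l : ℤ,
      P m n • ((P k 0 • (1 : B)) * (W l 0 • (1 : B))) =
        t ^ (-2 * n * l) • ((W l 0 • (1 : B)) * (P (m + k) n • (1 : B))) +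
        t ^ (-2 * n * (k + l)) • ((W (k + l) 0 • (1 : B)) * (P (m - k) n • (1 : B))) := by
  intro m n k l
  have hterm1 : P (m+k) n * W l 0 = t ^ (-2*n*l) • (W l 0 * P (m+k) n) := by
    rw [R2]; congr 1; ring
  have hW : W k 0 * W l 0 = W (k+l) 0 := by
    have h := R4 k 0 l 0
    simpa using h
  have hterm2 : P (m-k) n * W (k+l) 0 = t ^ (-2*n*(k+l)) • (W (k+l) 0 * P (m-k) n) := by
    rw [R2]; congr 1; ring
  have key : P m n * (P k 0 * W l 0) =
      t ^ (-2*n*l) • (W l 0 * P (m+k) n) + t ^ (-2*n*(k+l)) • (W (k+l) 0 * P (m-k) n) := by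
    have r1 := R1 m n k 0
    simp only [add_zero, sub_zero] at r1
    rw [← mul_assoc, r1, add_mul, hterm1, mul_assoc (P (m-k) n), hW, hterm2]
  calc P m n • ((P k 0 • (1:B)) * (W l 0 • (1:B)))
      = P m n • (P k 0 • (W l 0 • (1:B))) := by rw [← H1P]
    _ = (P m n * (P k 0 * W l 0)) • (1:B) := by rw [mul_smul, mul_smul]
    _ = t ^ (-2 * n * l) • ((W l 0 • (1 : B)) * (P (m + k) n • (1 : B))) +
        t ^ (-2 * n * (k + l)) • ((W (k + l) 0 • (1 : B)) * (P (m - k) n • (1 : B))) := by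
      rw [key, add_smul, hFA, hFA, mul_smul, mul_smul,
        H1W l (P (m+k) n • 1), H1W (k+l) (P (m-k) n • 1)]
end

section
/- (Action of 2-labeled torus skeins on the solid torus; second formula of the main action theorem.) For all integers $m,n,k,l$, one has $W(m,n)\cdot\big(x_{k,0}\, y_{l,0}\big) = t^{-2n(m+k+2l)}\, x_{k,0}\, y_{l+m,0}$ in $B$. -/
theorem stmt_8 (F : Type*) [Field F] (t : F) (ht : t ≠ 0)
    (A : Type*) [Ring A] [Algebra F A]
    (P W : ℤ → ℤ → A)
    (R1 : ∀ m n r s : ℤ,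
      P m n * P r s = P (m + r) (n + s) + P (m - r) (n - s) * W r s)
    (R2 : ∀ m n r s : ℤ,
      P m n * W r s = t ^ (2 * (m * s - n * r)) • (W r s * P m n))
    (R3 : ∀ m n : ℤ, P m n * W (-m) (-n) = P (-m) (-n))
    (R4 : ∀ m n r s : ℤ,
      W m n * W r s = t ^ (2 * (m * s - n * r)) • W (m + r) (n + s))
    (R5P : P 0 0 = 2) (R5W : W 0 0 = 1)
    (B : Type*) [CommRing B] [Algebra F B] [Module A B]
    (hFA : ∀ (c : F) (a : A) (u : B), (c • a) • u = c • (a • u))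
    (H1P : ∀ (m : ℤ) (u : B), P m 0 • u = (P m 0 • (1 : B)) * u)
    (H1W : ∀ (m : ℤ) (u : B), W m 0 • u = (W m 0 • (1 : B)) * u)
    (H2 : ∀ s : ℤ, W 0 s • (1 : B) = 1)
    :
    ∀ m n k l : ℤ,
      W m n • ((P k 0 • (1 : B)) * (W l 0 • (1 : B))) =
        t ^ (-2 * n * (m + k + 2 * l)) • ((P k 0 • (1 : B)) * (W (l + m) 0 • (1 : B))) := by
  intro m n k l
  have hinv : ∀ (e : ℤ) (x y : A), x = t ^ e • y → y = t ^ (-e) • x := by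
    intro e x y h
    rw [h, smul_smul, ← zpow_add₀ ht, neg_add_cancel, zpow_zero, one_smul]
  have h1 := hinv _ _ _ (R2 k 0 m n)
  have h2 := R4 m n l 0
  have h3 := hinv _ _ _ (R4 (m + l) 0 0 n)
  simp only [add_zero, zero_add, mul_zero, zero_mul, sub_zero, zero_sub, mul_one] at h1 h2 h3
  have key : W m n * P k 0 * W l 0
      = t ^ (-2 * n * (m + k + 2 * l)) • (P k 0 * (W (l + m) 0 * W 0 n)) := by
    rw [h1, smul_mul_assoc, mul_assoc, h2, mul_smul_comm, smul_smul, h3, mul_smul_comm,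
      smul_smul, ← zpow_add₀ ht, ← zpow_add₀ ht, add_comm l m]
    congr 2
    ring
  calc W m n • ((P k 0 • (1 : B)) * (W l 0 • (1 : B)))
      = W m n • (P k 0 • (W l 0 • (1 : B))) := by rw [← H1P]
    _ = (W m n * P k 0 * W l 0) • (1 : B) := by rw [← mul_smul, ← mul_smul]
    _ = t ^ (-2 * n * (m + k + 2 * l)) • ((P k 0 * (W (l + m) 0 * W 0 n)) • (1 : B)) := by
        rw [key, hFA]
    _ = t ^ (-2 * n * (m + k + 2 * l)) • ((P k 0 • (1 : B)) * (W (l + m) 0 • (1 : B))) := by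
        rw [mul_smul, mul_smul, H2, H1P]
end

section
/- (Pulling a 1-labeled skein back across the projection.) For all integers $m,n,r,s$, one has $x_{m,n}\, y_{r,s} = t^{2rn}\,\big(P(m,n)\cdot y_{r,s}\big)$ in $B$. -/
theorem stmt_9 (F : Type*) [Field F] (t : F) (ht : t ≠ 0)
    (A : Type*) [Ring A] [Algebra F A]
    (P W : ℤ → ℤ → A)
    (R1 : ∀ m n r s : ℤ,
      P m n * P r s = P (m + r) (n + s) + P (m - r) (n - s) * W r s)
    (R2 : ∀ m n r s : ℤ,
      P m n * W r s = t ^ (2 * (m * s - n * r)) • (W r s * P m n))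
    (R3 : ∀ m n : ℤ, P m n * W (-m) (-n) = P (-m) (-n))
    (R4 : ∀ m n r s : ℤ,
      W m n * W r s = t ^ (2 * (m * s - n * r)) • W (m + r) (n + s))
    (R5P : P 0 0 = 2) (R5W : W 0 0 = 1)
    (B : Type*) [CommRing B] [Algebra F B] [Module A B]
    (hFA : ∀ (c : F) (a : A) (u : B), (c • a) • u = c • (a • u))
    (H1P : ∀ (m : ℤ) (u : B), P m 0 • u = (P m 0 • (1 : B)) * u)
    (H1W : ∀ (m : ℤ) (u : B), W m 0 • u = (W m 0 • (1 : B)) * u)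
    (H2 : ∀ s : ℤ, W 0 s • (1 : B) = 1)
    :
    ∀ m n r s : ℤ,
      (P m n • (1 : B)) * (W r s • (1 : B)) =
        t ^ (2 * r * n) • (P m n • (W r s • (1 : B))) := by
  intro m n r s
  -- A-level identity: W r s = t^(-(2*(r*s))) • (W r 0 * W 0 s)
  have hA : (t ^ (-(2*(r*s)))) • (W r 0 * W 0 s) = W r s := by
    rw [R4, smul_smul, ← zpow_add₀ ht]
    norm_num
  have hW1 : W r s • (1:B) = (t ^ (-(2*(r*s)))) • (W r 0 • (1:B)) := by
    rw [← hA, hFA, mul_smul, H2]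
  have key : P m n • (W r s • (1:B))
      = (t ^ (-(2*(r*s)) + 2*(m*0 - n*r))) • ((W r 0 • (1:B)) * (P m n • (1:B))) := by
    rw [hW1, ← hFA, ← mul_smul, mul_smul_comm, hFA, R2, hFA, smul_smul, ← zpow_add₀ ht,
      mul_smul, H1W]
  rw [key, hW1, mul_smul_comm, smul_smul, ← zpow_add₀ ht, mul_comm (P m n • (1:B))]
  congr 1
  ring
end

section
/- (Pulling a 2-labeled skein back across the projection.) For all integers $m,n,r,s$, one has $x_{m,n}\, y_{r,s} = t^{2ms}\,\big(W(r,s)\cdot x_{m,n}\big)$ in $B$. -/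
theorem stmt_10 (F : Type*) [Field F] (t : F) (ht : t ≠ 0)
    (A : Type*) [Ring A] [Algebra F A]
    (P W : ℤ → ℤ → A)
    (R1 : ∀ m n r s : ℤ,
      P m n * P r s = P (m + r) (n + s) + P (m - r) (n - s) * W r s)
    (R2 : ∀ m n r s : ℤ,
      P m n * W r s = t ^ (2 * (m * s - n * r)) • (W r s * P m n))
    (R3 : ∀ m n : ℤ, P m n * W (-m) (-n) = P (-m) (-n))
    (R4 : ∀ m n r s : ℤ,
      W m n * W r s = t ^ (2 * (m * s - n * r)) • W (m + r) (n + s))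
    (R5P : P 0 0 = 2) (R5W : W 0 0 = 1)
    (B : Type*) [CommRing B] [Algebra F B] [Module A B]
    (hFA : ∀ (c : F) (a : A) (u : B), (c • a) • u = c • (a • u))
    (H1P : ∀ (m : ℤ) (u : B), P m 0 • u = (P m 0 • (1 : B)) * u)
    (H1W : ∀ (m : ℤ) (u : B), W m 0 • u = (W m 0 • (1 : B)) * u)
    (H2 : ∀ s : ℤ, W 0 s • (1 : B) = 1)
    :
    ∀ m n r s : ℤ,
      (P m n • (1 : B)) * (W r s • (1 : B)) =
        t ^ (2 * m * s) • (W r s • (P m n • (1 : B))) := by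

  intro m n r s
  have hsc : ∀ (c : F) (a : A) (u : B), a • (c • u) = c • (a • u) := by
    intro c a u
    have h1 : c • u = (c • (1 : A)) • u := by rw [hFA, one_smul]
    rw [h1, ← mul_smul, mul_smul_comm, mul_one]
    exact hFA c a u
  have hc : ∀ (e : ℤ) (x y : A), x = t ^ e • y → y = t ^ (-e) • x := by
    intro e x y h
    rw [h, smul_smul, ← zpow_add₀ ht, neg_add_cancel, zpow_zero, one_smul]
  have hWrs : W r s = t ^ (-(2 * (r * s))) • (W r 0 * W 0 s) := by
    apply hc
    have h4 := R4 r 0 0 s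
    simp only [mul_zero, zero_mul, sub_zero, add_zero, zero_add] at h4
    rw [h4]
  have hy : W r s • (1 : B) = t ^ (-(2 * (r * s))) • (W r 0 • (1 : B)) := by
    rw [hWrs, hFA, mul_smul, H2]
  have hswap : ∀ r' s' : ℤ, W r' s' • (P m n • (1 : B)) =
      t ^ (-(2 * (m * s' - n * r'))) • (P m n • (W r' s' • (1 : B))) := by
    intro r' s'
    have h2 : W r' s' * P m n = t ^ (-(2 * (m * s' - n * r'))) • (P m n * W r' s') :=
      hc _ _ _ (R2 m n r' s')
    rw [← mul_smul, h2, hFA, mul_smul]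
  have hL : (P m n • (1 : B)) * (W r s • (1 : B)) =
      (t ^ (-(2 * (r * s))) * t ^ (-(2 * (m * 0 - n * r)))) •
        (P m n • (W r 0 • (1 : B))) := by
    rw [hy, mul_smul_comm, mul_comm (P m n • (1 : B)), ← H1W, hswap r 0, smul_smul]
  have hR : t ^ (2 * m * s) • (W r s • (P m n • (1 : B))) =
      (t ^ (2 * m * s) * (t ^ (-(2 * (m * s - n * r))) * t ^ (-(2 * (r * s))))) •
        (P m n • (W r 0 • (1 : B))) := by
    rw [hswap r s, hy, hsc, smul_smul, smul_smul, mul_assoc]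
  rw [hL, hR, ← zpow_add₀ ht, ← zpow_add₀ ht, ← zpow_add₀ ht]
  congr 1
  ring_nf
end
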